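/- arXiv:2104.10095 — 3 statements merged into one kernel-verified Lean document; each statement's English description precedes it below -/
import Mathlib

section
/- For any integer K ≥ 1 and probability p ∈ (0,1], the expected reciprocal of a binomial random variable conditioned on its support, computed as f(K,p) = Σ_{k=1}^{K} (1/k) · C(K,k) p^k (1-p)^{K-k}, satisfies f(K,p) ≤ 2/(K·p). -/
/-!
Since `(k + 1) * C(K + 1, k + 1) = (K + 1) * C(K, k)` and `(k + 1) / k ≤ 2` for `k ≥ 1`, each term
`C(K, k) p^k (1-p)^(K-k) / k` is at most `2 / ((K + 1) p)` times the binomial probability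
`C(K + 1, k + 1) p^(k+1) (1-p)^(K-k)`. These probabilities sum to at most `1`, and
`2 / ((K + 1) p) ≤ 2 / (K p)`.
-/

open Finset

lemma one_div_mul_choose_le (n k : ℕ) (hk : 1 ≤ k) :
    1 / (k : ℝ) * n.choose k ≤ 2 / ((n : ℝ) + 1) * (n + 1).choose (k + 1) := by
  have hk' : (1 : ℝ) ≤ k := by exact_mod_cast hk
  have hsucc : ((n : ℝ) + 1) * n.choose k = ((n + 1).choose (k + 1) : ℝ) * ((k : ℝ) + 1) := by
    exact_mod_cast Nat.add_one_mul_choose_eq n k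
  rw [div_mul_eq_mul_div, div_mul_eq_mul_div, div_le_div_iff₀ (by positivity) (by positivity)]
  calc 1 * (n.choose k : ℝ) * ((n : ℝ) + 1) = ((n + 1).choose (k + 1) : ℝ) * ((k : ℝ) + 1) := by
        rw [← hsucc]; ring
    _ ≤ ((n + 1).choose (k + 1) : ℝ) * (2 * k) := by gcongr; linarith
    _ = 2 * (n + 1).choose (k + 1) * k := by ring

lemma sum_choose_mul_pow_le_one (n : ℕ) {p : ℝ} (hp : 0 ≤ p) (hp1 : p ≤ 1) {s : Finset ℕ}
    (hs : s ⊆ range (n + 1)) :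
    ∑ j ∈ s, (n.choose j : ℝ) * p ^ j * (1 - p) ^ (n - j) ≤ 1 := by
  have hq : 0 ≤ 1 - p := by linarith
  calc ∑ j ∈ s, (n.choose j : ℝ) * p ^ j * (1 - p) ^ (n - j)
      ≤ ∑ j ∈ range (n + 1), (n.choose j : ℝ) * p ^ j * (1 - p) ^ (n - j) :=
        sum_le_sum_of_subset_of_nonneg hs fun _ _ _ ↦ by positivity
    _ = (p + (1 - p)) ^ n := by
        rw [add_pow]; exact sum_congr rfl fun _ _ ↦ by ring
    _ = 1 := by simp

theorem stmt_0 (K : ℕ) (hK : 1 ≤ K) (p : ℝ) (hp : 0 < p) (hp1 : p ≤ 1) :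
    ∑ k ∈ Finset.Icc 1 K,
      (1 / (k : ℝ)) * (K.choose k : ℝ) * p ^ k * (1 - p) ^ (K - k)
      ≤ 2 / ((K : ℝ) * p) := by
  have hK' : (1 : ℝ) ≤ K := by exact_mod_cast hK
  have hshift : ((Icc 1 K).map (addRightEmbedding 1)) ⊆ range (K + 1 + 1) := by
    rw [map_add_right_Icc]; intro j hj; simp only [mem_Icc] at hj; simp only [mem_range]; omega
  calc ∑ k ∈ Icc 1 K, (1 / (k : ℝ)) * (K.choose k : ℝ) * p ^ k * (1 - p) ^ (K - k)
      ≤ ∑ k ∈ Icc 1 K, 2 / ((K : ℝ) + 1) * ((K + 1).choose (k + 1) : ℝ) * p ^ k * (1 - p) ^ (K - k) :=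
        sum_le_sum fun k hk ↦ by gcongr ?_ * _ * _; exact one_div_mul_choose_le K k (mem_Icc.mp hk).1
    _ = 2 / (((K : ℝ) + 1) * p) * ∑ j ∈ (Icc 1 K).map (addRightEmbedding 1),
          ((K + 1).choose j : ℝ) * p ^ j * (1 - p) ^ (K + 1 - j) := by
        rw [sum_map, mul_sum]
        refine sum_congr rfl fun k _ ↦ ?_
        simp only [addRightEmbedding_apply, Nat.add_sub_add_right]
        field_simp
        ring
    _ ≤ 2 / (((K : ℝ) + 1) * p) * 1 := by
        gcongr; exact sum_choose_mul_pow_le_one (K + 1) hp.le hp1 hshift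
    _ ≤ 2 / ((K : ℝ) * p) := by
        rw [mul_one]; gcongr; linarith
end

section
/- For any integer K ≥ 1 and probability p ∈ (0,1], the quantity h(K,p) = Σ_{k=1}^{K} (1/k²) · C(K,k) p^k (1-p)^{K-k} satisfies h(K,p) ≤ 6/(K²·p²). -/
/-!
Since `(k + 1)(k + 2) ≤ 6k²` for `k ≥ 1` and `(k + 1)(k + 2) C(K, k) = (K + 1)(K + 2) C(K + 2, k + 2)`,
each term of `h(K, p)` is at most `6 / ((K + 1)(K + 2) p²)` times the term `j = k + 2` of the
binomial expansion of `(p + (1 - p))^(K + 2) = 1`. Summing gives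
`h(K, p) ≤ 6 / ((K + 1)(K + 2) p²) ≤ 6 / (K² p²)`.
-/

open Finset

theorem Nat.add_one_mul_add_two_mul_choose (n k : ℕ) :
    (n + 1) * (n + 2) * n.choose k = (n + 2).choose (k + 2) * ((k + 1) * (k + 2)) := by
  calc (n + 1) * (n + 2) * n.choose k = (n + 2) * ((n + 1) * n.choose k) := by ring
    _ = (n + 1 + 1) * (n + 1).choose (k + 1) * (k + 1) := by
        rw [Nat.add_one_mul_choose_eq]; ring
    _ = (n + 2).choose (k + 2) * ((k + 1) * (k + 2)) := by
        rw [Nat.add_one_mul_choose_eq]; ring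

theorem one_div_sq_mul_choose_le (n : ℕ) {k : ℕ} (hk : 1 ≤ k) :
    1 / (k : ℝ) ^ 2 * n.choose k ≤ 6 / ((n + 1) * (n + 2)) * ((n + 2).choose (k + 2) : ℝ) := by
  rw [one_div_mul_eq_div, div_mul_eq_mul_div, div_le_div_iff₀ (by positivity) (by positivity)]
  have hchoose : ((n + 1) * (n + 2) * n.choose k : ℝ)
      = (n + 2).choose (k + 2) * ((k + 1) * (k + 2)) := by
    exact_mod_cast Nat.add_one_mul_add_two_mul_choose n k
  have hk' : (1 : ℝ) ≤ k := by exact_mod_cast hk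
  have hk6 : ((k : ℝ) + 1) * (k + 2) ≤ 6 * k ^ 2 := by nlinarith
  calc (n.choose k : ℝ) * ((n + 1) * (n + 2))
        = (n + 2).choose (k + 2) * ((k + 1) * (k + 2)) := by
        rw [← hchoose]; ring
    _ ≤ (n + 2).choose (k + 2) * (6 * k ^ 2) := by gcongr
    _ = 6 * (n + 2).choose (k + 2) * k ^ 2 := by ring

theorem sum_choose_mul_pow_mul_one_sub_pow_le_one {n : ℕ} {s : Finset ℕ}
    (hs : s ⊆ range (n + 1)) {p : ℝ} (hp0 : 0 ≤ p) (hp1 : p ≤ 1) :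
    ∑ j ∈ s, (n.choose j : ℝ) * p ^ j * (1 - p) ^ (n - j) ≤ 1 := by
  have hq : 0 ≤ 1 - p := by linarith
  calc ∑ j ∈ s, (n.choose j : ℝ) * p ^ j * (1 - p) ^ (n - j)
      ≤ ∑ j ∈ range (n + 1), (n.choose j : ℝ) * p ^ j * (1 - p) ^ (n - j) :=
        sum_le_sum_of_subset_of_nonneg hs fun _ _ _ => by positivity
    _ = (p + (1 - p)) ^ n := by
        rw [add_pow]; exact sum_congr rfl fun _ _ => by ring
    _ = 1 := by simp

theorem sum_Icc_choose_add_two_mul_pow_le_one (n : ℕ) {p : ℝ} (hp0 : 0 ≤ p) (hp1 : p ≤ 1) :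
    ∑ k ∈ Icc 1 n, ((n + 2).choose (k + 2) : ℝ) * p ^ (k + 2) * (1 - p) ^ (n - k) ≤ 1 := by
  have hshift : ∑ k ∈ Icc 1 n, ((n + 2).choose (k + 2) : ℝ) * p ^ (k + 2) * (1 - p) ^ (n - k)
      = ∑ j ∈ Icc 3 (n + 2), ((n + 2).choose j : ℝ) * p ^ j * (1 - p) ^ (n + 2 - j) := by
    rw [show Icc 3 (n + 2) = (Icc 1 n).map (addRightEmbedding 2) from
      (map_add_right_Icc 1 n 2).symm, sum_map]
    simp only [addRightEmbedding_apply, Nat.add_sub_add_right]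
  rw [hshift]
  refine sum_choose_mul_pow_mul_one_sub_pow_le_one (fun j hj => ?_) hp0 hp1
  simp only [mem_Icc, mem_range] at hj ⊢
  omega

theorem stmt_1 (K : ℕ) (hK : 1 ≤ K) (p : ℝ) (hp : 0 < p) (hp1 : p ≤ 1) :
    ∑ k ∈ Finset.Icc 1 K,
      (1 / (k : ℝ) ^ 2) * (K.choose k : ℝ) * p ^ k * (1 - p) ^ (K - k)
      ≤ 6 / ((K : ℝ) ^ 2 * p ^ 2) := by
  set c : ℝ := 6 / (((K : ℝ) + 1) * (K + 2) * p ^ 2)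
  have hq : 0 ≤ 1 - p := by linarith
  calc ∑ k ∈ Icc 1 K, (1 / (k : ℝ) ^ 2) * (K.choose k : ℝ) * p ^ k * (1 - p) ^ (K - k)
      ≤ ∑ k ∈ Icc 1 K, c * (((K + 2).choose (k + 2) : ℝ) * p ^ (k + 2) * (1 - p) ^ (K - k)) := by
        refine sum_le_sum fun k hk => ?_
        have hterm := one_div_sq_mul_choose_le K (mem_Icc.mp hk).1
        calc 1 / (k : ℝ) ^ 2 * K.choose k * p ^ k * (1 - p) ^ (K - k)
            ≤ 6 / ((K + 1) * (K + 2)) * (K + 2).choose (k + 2) * p ^ k * (1 - p) ^ (K - k) := by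
              gcongr
          _ = _ := by simp only [c]; rw [pow_add]; field_simp
    _ = c * ∑ k ∈ Icc 1 K, ((K + 2).choose (k + 2) : ℝ) * p ^ (k + 2) * (1 - p) ^ (K - k) := by
        rw [mul_sum]
    _ ≤ c := mul_le_of_le_one_right (by positivity)
          (sum_Icc_choose_add_two_mul_pow_le_one K hp.le hp1)
    _ ≤ 6 / ((K : ℝ) ^ 2 * p ^ 2) := by
        have hK' : (1 : ℝ) ≤ K := by exact_mod_cast hK
        simp only [c]
        gcongr
        nlinarith
end

section
/- Let W* ∈ ℝ^{D×d} have orthonormal columns consisting of d distinct eigenvectors of a symmetric positive semidefinite matrix R ∈ ℝ^{D×D}, and let Q ∈ ℝ^{d×d} be orthogonal. Then W = W*Q is a stationary point of F(W) = tr(R) − 2tr(WᵀRW) + tr(WᵀRWWᵀW) (equivalently of (1/L)Σ_i ‖x_i − WWᵀx_i‖² with R = XXᵀ/L), i.e., ∇F(W) = 2(−2R W + R W WᵀW + W Wᵀ R W)·(appropriate scaling) vanishes at W = W*Q. -/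
open Matrix

theorem stmt_19 {D d : ℕ}
    (R : Matrix (Fin D) (Fin D) ℝ) (hR : R.PosSemidef)
    (Wstar : Matrix (Fin D) (Fin d) ℝ)
    (horth : Wstarᵀ * Wstar = 1)
    (lam : Fin d → ℝ) (hlamdist : Function.Injective lam)
    (heig : R * Wstar = Wstar * Matrix.diagonal lam)
    (Q : Matrix (Fin d) (Fin d) ℝ) (hQ1 : Qᵀ * Q = 1) (hQ2 : Q * Qᵀ = 1)
    (W : Matrix (Fin D) (Fin d) ℝ) (hW : W = Wstar * Q) :
    (2 : ℝ) • ((-2 : ℝ) • (R * W) + R * W * Wᵀ * W + W * Wᵀ * R * W) = 0 := by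
  subst hW
  have hWW : (Wstar * Q)ᵀ * (Wstar * Q) = 1 := by
    rw [transpose_mul]
    calc Qᵀ * Wstarᵀ * (Wstar * Q) = Qᵀ * (Wstarᵀ * Wstar) * Q := by
          rw [Matrix.mul_assoc, Matrix.mul_assoc, Matrix.mul_assoc]
      _ = 1 := by rw [horth, Matrix.mul_one, hQ1]
  have hRW : R * (Wstar * Q) = Wstar * Matrix.diagonal lam * Q := by
    rw [← Matrix.mul_assoc, heig]
  have h3 : (Wstar * Q) * (Wstar * Q)ᵀ * R * (Wstar * Q) = R * (Wstar * Q) := by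
    rw [transpose_mul]
    simp only [Matrix.mul_assoc]
    rw [show R * (Wstar * Q) = Wstar * (Matrix.diagonal lam * Q) from by
      rw [← Matrix.mul_assoc, heig, Matrix.mul_assoc]]
    rw [← Matrix.mul_assoc Wstarᵀ, horth, Matrix.one_mul,
        ← Matrix.mul_assoc Q Qᵀ, hQ2, Matrix.one_mul]
  rw [Matrix.mul_assoc (R * (Wstar * Q)), hWW, Matrix.mul_one, h3]
  ext i j
  simp [Matrix.add_apply, Matrix.smul_apply]
  ring
end
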